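/- Let m ≥ 1, let (z_i)_{i∈ℕ} be an enumeration of ℤ^m in ℝ^m, let r₁ ≥ r₂ ≥ … > 0 with δ = 1 − 2r₁ > 0 and ∑_{i=1}^∞ r_i^{2m} < ∞, and let Ω = ⋃_{i∈ℕ} B(z_i; r_i). Let H_Ω(t) = ∫_Ω ∫_Ω (4πt)^{-m/2} e^{-|x−y|²/(4t)} dy dx and, for each i, H_{B(z_i;r_i)}(t) = ∫_{B(z_i;r_i)} ∫_{B(z_i;r_i)} (4πt)^{-m/2} e^{-|x−y|²/(4t)} dy dx. Then for all t > 0, | H_Ω(t) − ∑_{i=1}^∞ H_{B(z_i;r_i)}(t) | ≤ ω_m² e^{-δ²/(8t)} ( √2/δ + (4πt)^{-1/2} )^m ∑_{i=1}^∞ r_i^{2m}, where ω_m is the volume of the unit ball in ℝ^m. -/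

import Mathlib

open MeasureTheory Metric ENNReal

/-- The heat content of an open set `Ω ⊆ ℝᵐ` at time `t`, computed with the Euclidean
heat kernel `p(x,y;t) = (4πt)^{-m/2} e^{-|x-y|²/(4t)}`. -/
noncomputable def heatContent {m : ℕ} (Ω : Set (EuclideanSpace ℝ (Fin m))) (t : ℝ) :
    ℝ≥0∞ :=
  ∫⁻ x in Ω, ∫⁻ y in Ω,
    ENNReal.ofReal ((4 * Real.pi * t) ^ (-(m : ℝ) / 2) * Real.exp (-dist x y ^ 2 / (4 * t)))

/-- `z : ℕ → ℝᵐ` is an enumeration of the integer lattice `ℤᵐ ⊆ ℝᵐ`. -/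
def IsLatticeEnum (m : ℕ) (z : ℕ → EuclideanSpace ℝ (Fin m)) : Prop :=
  Function.Injective z ∧
    Set.range z = {x : EuclideanSpace ℝ (Fin m) | ∀ j : Fin m, ∃ k : ℤ, x j = (k : ℝ)}

/-!
Split the double integral over `Ω = ⋃ Bᵢ` into the diagonal terms, which are the heat contents
of the balls, and the cross terms `i ≠ j`. For `x ∈ Bᵢ`, `y ∈ Bⱼ` the triangle inequality and
`|zᵢ - zⱼ| ≥ 1` give `|x - y| ≥ δ |zᵢ - zⱼ|`, so the kernel is at most
`(4πt)^{-m/2} e^{-δ²/(8t)} e^{-a |zᵢ - zⱼ|²}` with `a = δ²/(8t)`. By `2 |Bᵢ| |Bⱼ| ≤ |Bᵢ|² + |Bⱼ|²`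
and the symmetry of this bound in `i, j`, the cross terms add up to at most `∑ |Bᵢ|² = ω² ∑ rᵢ^{2m}`
times a lattice Gaussian sum. That sum factorises over the coordinates, and each factor
`∑_{n ∈ ℤ} e^{-a n²}` is at most `1 + ∫_ℝ e^{-a x²} = 1 + √(π/a)`.
-/

open Real

lemma tsum_exp_neg_mul_succ_sq_le {a : ℝ} (ha : 0 < a) :
    ∑' n : ℕ, ENNReal.ofReal (exp (-a * ((n : ℝ) + 1) ^ 2)) ≤ ENNReal.ofReal (√(π / a) / 2) := by
  refine ENNReal.tsum_le_of_sum_range_le fun N => ?_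
  rw [← ENNReal.ofReal_sum_of_nonneg fun n _ => (exp_pos _).le]
  refine ENNReal.ofReal_le_ofReal ?_
  have hanti : AntitoneOn (fun x : ℝ => exp (-a * x ^ 2)) (Set.Icc 0 (0 + N)) :=
    fun x hx y _ hxy => exp_le_exp.2 <| by nlinarith [pow_le_pow_left₀ hx.1 hxy 2]
  calc ∑ n ∈ Finset.range N, exp (-a * ((n : ℝ) + 1) ^ 2)
      ≤ ∫ x in (0 : ℝ)..N, exp (-a * x ^ 2) := by simpa using hanti.sum_le_integral
    _ ≤ ∫ x in Set.Ioi 0, exp (-a * x ^ 2) := by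
      rw [intervalIntegral.integral_of_le N.cast_nonneg]
      exact setIntegral_mono_set (integrable_exp_neg_mul_sq ha).integrableOn
        (.of_forall fun _ => (exp_pos _).le) (.of_forall fun _ hx => hx.1)
    _ = √(π / a) / 2 := integral_gaussian_Ioi a

lemma tsum_int_exp_neg_mul_sq_le {a : ℝ} (ha : 0 < a) :
    ∑' n : ℤ, ENNReal.ofReal (exp (-a * (n : ℝ) ^ 2)) ≤ ENNReal.ofReal (1 + √(π / a)) := by
  rw [tsum_of_nat_of_neg_add_one ENNReal.summable ENNReal.summable,
    tsum_eq_zero_add' ENNReal.summable]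
  calc _ = ENNReal.ofReal 1 + ∑' n : ℕ, ENNReal.ofReal (exp (-a * ((n : ℝ) + 1) ^ 2)) +
        ∑' n : ℕ, ENNReal.ofReal (exp (-a * ((n : ℝ) + 1) ^ 2)) := by
        simp only [Int.cast_neg, neg_sq]
        push_cast
        simp
    _ ≤ ENNReal.ofReal 1 + ENNReal.ofReal (√(π / a) / 2) + ENNReal.ofReal (√(π / a) / 2) := by
        gcongr <;> exact tsum_exp_neg_mul_succ_sq_le ha
    _ = ENNReal.ofReal (1 + √(π / a)) := by
        rw [← ENNReal.ofReal_add zero_le_one (by positivity),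
          ← ENNReal.ofReal_add (by positivity) (by positivity)]
        ring_nf

lemma ENNReal.tsum_pi_fin_prod {α : Type*} (f : α → ℝ≥0∞) (m : ℕ) :
    ∑' k : Fin m → α, ∏ j, f (k j) = (∑' x, f x) ^ m := by
  induction m with
  | zero => simp
  | succ m ih =>
    rw [← (Fin.consEquiv fun _ => α).tsum_eq, ENNReal.tsum_prod', pow_succ', ← ih,
      ← ENNReal.tsum_mul_right]
    refine tsum_congr fun x => ?_
    rw [← ENNReal.tsum_mul_left]
    refine tsum_congr fun k => ?_
    simp [Fin.consEquiv, Fin.prod_univ_succ]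

def latticePoint (m : ℕ) (k : Fin m → ℤ) : EuclideanSpace ℝ (Fin m) :=
  WithLp.toLp 2 fun j => (k j : ℝ)

lemma latticePoint_injective (m : ℕ) : Function.Injective (latticePoint m) := by
  intro k l h
  funext j
  simpa [latticePoint] using congrArg (· j) h

lemma range_latticePoint (m : ℕ) :
    Set.range (latticePoint m) =
      {x : EuclideanSpace ℝ (Fin m) | ∀ j : Fin m, ∃ k : ℤ, x j = (k : ℝ)} := by
  ext x
  refine ⟨fun ⟨k, hk⟩ j => ⟨k j, hk ▸ rfl⟩, fun hx => ?_⟩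
  choose k hk using hx
  exact ⟨k, by ext j; exact (hk j).symm⟩

lemma dist_latticePoint_sq (m : ℕ) (k l : Fin m → ℤ) :
    dist (latticePoint m k) (latticePoint m l) ^ 2 = ∑ j, ((k j - l j : ℤ) : ℝ) ^ 2 := by
  rw [EuclideanSpace.dist_eq, sq_sqrt (Finset.sum_nonneg fun _ _ => sq_nonneg _)]
  simp [latticePoint, Real.dist_eq, sq_abs]

lemma one_le_dist_latticePoint {m : ℕ} {k l : Fin m → ℤ} (h : k ≠ l) :
    1 ≤ dist (latticePoint m k) (latticePoint m l) := by
  obtain ⟨j, hj⟩ := Function.ne_iff.1 h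
  have hkl : (1 : ℝ) ≤ ((k j - l j : ℤ) : ℝ) ^ 2 := by
    rw [← sq_abs]
    exact_mod_cast one_le_pow₀ (Int.one_le_abs (sub_ne_zero.2 hj))
  rw [← one_le_sq_iff₀ dist_nonneg, dist_latticePoint_sq]
  exact hkl.trans <| Finset.single_le_sum (f := fun i => ((k i - l i : ℤ) : ℝ) ^ 2)
    (fun i _ => sq_nonneg _) (Finset.mem_univ j)

lemma tsum_latticePoint_exp_neg_mul_dist_sq_le {m : ℕ} {a : ℝ} (ha : 0 < a) (c : Fin m → ℤ) :
    ∑' k, ENNReal.ofReal (exp (-a * dist (latticePoint m c) (latticePoint m k) ^ 2)) ≤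
      ENNReal.ofReal (1 + √(π / a)) ^ m := by
  rw [← (Equiv.addRight c).tsum_eq]
  calc ∑' k, ENNReal.ofReal (exp (-a * dist (latticePoint m c) (latticePoint m (k + c)) ^ 2))
      = ∑' k : Fin m → ℤ, ∏ j, ENNReal.ofReal (exp (-a * (k j : ℝ) ^ 2)) := by
        refine tsum_congr fun k => ?_
        rw [dist_comm, dist_latticePoint_sq, Finset.mul_sum, exp_sum,
          ENNReal.ofReal_prod_of_nonneg fun _ _ => (exp_pos _).le]
        simp
    _ = (∑' n : ℤ, ENNReal.ofReal (exp (-a * (n : ℝ) ^ 2))) ^ m :=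
        ENNReal.tsum_pi_fin_prod (fun n : ℤ => ENNReal.ofReal (exp (-a * (n : ℝ) ^ 2))) m
    _ ≤ _ := pow_le_pow_left' (tsum_int_exp_neg_mul_sq_le ha) m

namespace IsLatticeEnum

variable {m : ℕ} {z : ℕ → EuclideanSpace ℝ (Fin m)}

lemma range_eq (hz : IsLatticeEnum m z) : Set.range z = Set.range (latticePoint m) := by
  rw [hz.2, range_latticePoint]

lemma one_le_dist (hz : IsLatticeEnum m z) {i j : ℕ} (hij : i ≠ j) : 1 ≤ dist (z i) (z j) := by
  obtain ⟨k, hk⟩ : z i ∈ Set.range (latticePoint m) := hz.range_eq ▸ ⟨i, rfl⟩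
  obtain ⟨l, hl⟩ : z j ∈ Set.range (latticePoint m) := hz.range_eq ▸ ⟨j, rfl⟩
  rw [← hk, ← hl]
  exact one_le_dist_latticePoint fun h => hij (hz.1 (hk.symm.trans (h ▸ hl)))

lemma tsum_exp_neg_mul_dist_sq_le (hz : IsLatticeEnum m z) {a : ℝ} (ha : 0 < a) (i : ℕ) :
    ∑' j, ENNReal.ofReal (exp (-a * dist (z i) (z j) ^ 2)) ≤
      ENNReal.ofReal (1 + √(π / a)) ^ m := by
  obtain ⟨c, hc⟩ : z i ∈ Set.range (latticePoint m) := hz.range_eq ▸ ⟨i, rfl⟩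
  rw [← hc]
  let F := fun x => ENNReal.ofReal (exp (-a * dist (latticePoint m c) x ^ 2))
  calc ∑' j, F (z j) = ∑' x : Set.range z, F x := (tsum_range F hz.1).symm
    _ = ∑' x : Set.range (latticePoint m), F x := by rw [hz.range_eq]
    _ = ∑' k, F (latticePoint m k) := tsum_range F (latticePoint_injective m)
    _ ≤ _ := tsum_latticePoint_exp_neg_mul_dist_sq_le ha c

end IsLatticeEnum

section DoubleIntegral

variable {α ι : Type*} [MeasurableSpace α] {μ : Measure α}

lemma lintegral_lintegral_iUnion [SFinite μ] [Countable ι] {s : ι → Set α}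
    (hs : ∀ i, MeasurableSet (s i)) (hd : Pairwise (Function.onFun Disjoint s))
    {K : α → α → ℝ≥0∞} (hK : Measurable (Function.uncurry K)) :
    ∫⁻ x in ⋃ i, s i, ∫⁻ y in ⋃ i, s i, K x y ∂μ ∂μ =
      ∑' i, ∑' j, ∫⁻ x in s i, ∫⁻ y in s j, K x y ∂μ ∂μ := by
  have hinner (x : α) : ∫⁻ y in ⋃ i, s i, K x y ∂μ = ∑' j, ∫⁻ y in s j, K x y ∂μ :=
    lintegral_iUnion hs hd _
  simp_rw [hinner]
  rw [lintegral_tsum fun j => (hK.lintegral_prod_right (ν := μ.restrict (s j))).aemeasurable,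
    ENNReal.tsum_comm]
  simp_rw [lintegral_iUnion hs hd]

lemma setLIntegral_setLIntegral_le {s u : Set α} {K : α → α → ℝ≥0∞} {c : ℝ≥0∞}
    (hK : ∀ x ∈ s, ∀ y ∈ u, K x y ≤ c) :
    ∫⁻ x in s, ∫⁻ y in u, K x y ∂μ ∂μ ≤ μ s * μ u * c := by
  calc ∫⁻ x in s, ∫⁻ y in u, K x y ∂μ ∂μ ≤ ∫⁻ _ in s, c * μ u ∂μ :=
        setLIntegral_mono measurable_const fun x hx =>
          (setLIntegral_mono measurable_const (hK x hx)).trans_eq (setLIntegral_const _ _)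
    _ = μ s * μ u * c := by rw [setLIntegral_const]; ring

end DoubleIntegral

lemma ENNReal.two_mul_le_add_sq (a b : ℝ≥0∞) : 2 * a * b ≤ a ^ 2 + b ^ 2 := by
  rcases eq_or_ne a ⊤ with rfl | ha
  · simp
  rcases eq_or_ne b ⊤ with rfl | hb
  · simp
  lift a to NNReal using ha
  lift b to NNReal using hb
  exact_mod_cast _root_.two_mul_le_add_sq a b

lemma ENNReal.tsum_tsum_mul_mul_le {ι : Type*} (v : ι → ℝ≥0∞) {J : ι → ι → ℝ≥0∞}
    (hJ : ∀ i j, J i j = J j i) {R : ℝ≥0∞} (hR : ∀ i, ∑' j, J i j ≤ R) :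
    ∑' i, ∑' j, v i * v j * J i j ≤ R * ∑' i, v i ^ 2 := by
  have hrow : ∑' i, ∑' j, v i ^ 2 * J i j ≤ R * ∑' i, v i ^ 2 := by
    rw [← ENNReal.tsum_mul_left]
    refine ENNReal.tsum_le_tsum fun i => ?_
    rw [ENNReal.tsum_mul_left, mul_comm R]
    gcongr
    exact hR i
  have hcol : ∑' i, ∑' j, v j ^ 2 * J i j ≤ R * ∑' i, v i ^ 2 := by
    rw [ENNReal.tsum_comm]
    simpa only [hJ] using hrow
  refine (ENNReal.mul_le_mul_iff_right two_ne_zero ENNReal.ofNat_ne_top).1 ?_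
  calc 2 * ∑' i, ∑' j, v i * v j * J i j = ∑' i, ∑' j, 2 * v i * v j * J i j := by
        simp only [← ENNReal.tsum_mul_left, mul_assoc]
    _ ≤ ∑' i, ∑' j, (v i ^ 2 * J i j + v j ^ 2 * J i j) := by
        gcongr with i j
        rw [← add_mul]
        gcongr
        exact ENNReal.two_mul_le_add_sq _ _
    _ ≤ 2 * (R * ∑' i, v i ^ 2) := by
        simp only [ENNReal.tsum_add]
        rw [two_mul]
        exact add_le_add hrow hcol

lemma mul_dist_le_dist_of_mem_ball {E : Type*} [PseudoMetricSpace E] {c c' x y : E} {ρ : ℝ}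
    (hx : x ∈ ball c ρ) (hy : y ∈ ball c' ρ) (hc : 1 ≤ dist c c') :
    (1 - 2 * ρ) * dist c c' ≤ dist x y := by
  rw [mem_ball'] at hx
  rw [mem_ball] at hy
  have hρ : 0 < ρ := dist_nonneg.trans_lt hx
  nlinarith [dist_triangle4 c x y c']

lemma exp_neg_sq_div_le_of_mul_le {t δ D d : ℝ} (ht : 0 < t) (hδ : 0 ≤ δ) (hD : 1 ≤ D)
    (hd : δ * D ≤ d) :
    exp (-d ^ 2 / (4 * t)) ≤ exp (-δ ^ 2 / (8 * t)) * exp (-(δ ^ 2 / (8 * t)) * D ^ 2) := by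
  have hsq : (δ * D) ^ 2 ≤ d ^ 2 := pow_le_pow_left₀ (by positivity) hd 2
  have key : δ ^ 2 * (1 + D ^ 2) ≤ 2 * d ^ 2 := by
    nlinarith [mul_le_mul_of_nonneg_left (one_le_pow₀ (n := 2) hD) (sq_nonneg δ)]
  rw [← exp_add, exp_le_exp]
  calc -d ^ 2 / (4 * t) = -(2 * d ^ 2) / (8 * t) := by ring
    _ ≤ -(δ ^ 2 * (1 + D ^ 2)) / (8 * t) := by gcongr
    _ = -δ ^ 2 / (8 * t) + -(δ ^ 2 / (8 * t)) * D ^ 2 := by ring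

noncomputable def heatKernel (m : ℕ) (t : ℝ) (x y : EuclideanSpace ℝ (Fin m)) : ℝ≥0∞ :=
  ENNReal.ofReal ((4 * π * t) ^ (-(m : ℝ) / 2) * exp (-dist x y ^ 2 / (4 * t)))

lemma measurable_heatKernel (m : ℕ) (t : ℝ) : Measurable (Function.uncurry (heatKernel m t)) := by
  unfold heatKernel
  fun_prop

section HeatKernel

variable {m : ℕ}

lemma heatKernel_le_of_mem_ball {t ρ : ℝ} {c c' x y : EuclideanSpace ℝ (Fin m)} (ht : 0 < t)
    (hρ : 2 * ρ ≤ 1) (hc : 1 ≤ dist c c') (hx : x ∈ ball c ρ) (hy : y ∈ ball c' ρ) :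
    heatKernel m t x y ≤
      ENNReal.ofReal ((4 * π * t) ^ (-(m : ℝ) / 2) * exp (-(1 - 2 * ρ) ^ 2 / (8 * t))) *
        ENNReal.ofReal (exp (-((1 - 2 * ρ) ^ 2 / (8 * t)) * dist c c' ^ 2)) := by
  have hC : 0 ≤ (4 * π * t) ^ (-(m : ℝ) / 2) := by positivity
  rw [← ENNReal.ofReal_mul (by positivity), mul_assoc]
  exact ENNReal.ofReal_le_ofReal <| mul_le_mul_of_nonneg_left
    (exp_neg_sq_div_le_of_mul_le ht (by linarith) hc (mul_dist_le_dist_of_mem_ball hx hy hc)) hC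

lemma heatContent_iUnion {s : ℕ → Set (EuclideanSpace ℝ (Fin m))}
    (hs : ∀ i, MeasurableSet (s i)) (hd : Pairwise (Function.onFun Disjoint s)) (t : ℝ) :
    heatContent (⋃ i, s i) t = ∑' i, heatContent (s i) t +
      ∑' i, ∑' j, if j = i then 0 else ∫⁻ x in s i, ∫⁻ y in s j, heatKernel m t x y := by
  rw [← ENNReal.tsum_add]
  refine (lintegral_lintegral_iUnion hs hd (measurable_heatKernel m t)).trans
    (tsum_congr fun i => by convert ENNReal.tsum_eq_add_tsum_ite i; rfl)

end HeatKernel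

lemma volume_ball_euclideanSpace {m : ℕ} (c : EuclideanSpace ℝ (Fin m)) {ρ : ℝ} (hρ : 0 < ρ) :
    volume (ball c ρ) = ENNReal.ofReal ρ ^ m * volume (ball (0 : EuclideanSpace ℝ (Fin m)) 1) := by
  rw [Measure.addHaar_ball_of_pos _ _ hρ, finrank_euclideanSpace_fin, ENNReal.ofReal_pow hρ.le]

lemma tsum_volume_ball_sq {m : ℕ} {ι : Type*} (c : ι → EuclideanSpace ℝ (Fin m)) {r : ι → ℝ}
    (hr : ∀ i, 0 < r i) (hsum : Summable fun i => r i ^ (2 * m)) :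
    ∑' i, volume (ball (c i) (r i)) ^ 2 = ENNReal.ofReal
      ((volume (ball (0 : EuclideanSpace ℝ (Fin m)) 1)).toReal ^ 2 * ∑' i, r i ^ (2 * m)) := by
  rw [ENNReal.ofReal_mul (by positivity), ENNReal.ofReal_pow ENNReal.toReal_nonneg,
    ENNReal.ofReal_toReal measure_ball_lt_top.ne,
    ENNReal.ofReal_tsum_of_nonneg (fun i => pow_nonneg (hr i).le _) hsum, ← ENNReal.tsum_mul_left]
  refine tsum_congr fun i => ?_
  rw [volume_ball_euclideanSpace _ (hr i), ENNReal.ofReal_pow (hr i).le, pow_mul]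
  ring

lemma rpow_mul_one_add_sqrt_pow (m : ℕ) {t δ : ℝ} (ht : 0 < t) (hδ : 0 < δ) :
    (4 * π * t) ^ (-(m : ℝ) / 2) * (1 + √(π / (δ ^ 2 / (8 * t)))) ^ m =
      (√2 / δ + (4 * π * t) ^ (-(1 : ℝ) / 2)) ^ m := by
  have h4 : (0 : ℝ) < 4 * π * t := by positivity
  have hu : (4 * π * t) ^ (-(m : ℝ) / 2) = ((4 * π * t) ^ (-(1 : ℝ) / 2)) ^ m := by
    rw [← Real.rpow_natCast, ← rpow_mul h4.le]
    ring_nf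
  rw [hu, ← mul_pow]
  congr 1
  have hs : (4 * π * t) ^ (-(1 : ℝ) / 2) = (√(4 * π * t))⁻¹ := by
    rw [show (-(1 : ℝ) / 2) = -(1 / 2) by ring, rpow_neg h4.le, ← sqrt_eq_rpow]
  have hq : √(π / (δ ^ 2 / (8 * t))) = 2 * √(2 * π * t) / δ := by
    rw [show π / (δ ^ 2 / (8 * t)) = (2 * √(2 * π * t) / δ) ^ 2 by
      rw [div_pow, mul_pow, sq_sqrt (by positivity)]
      field_simp
      ring]
    exact sqrt_sq (by positivity)
  have h4s : √(4 * π * t) = √2 * √(2 * π * t) := by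
    rw [← sqrt_mul zero_le_two]
    ring_nf
  have hst : 0 < √(2 * π * t) := sqrt_pos.2 (by positivity)
  have h2 : √2 * √2 = 2 := mul_self_sqrt zero_le_two
  rw [hs, hq, h4s]
  field_simp
  linear_combination (-√(2 * π * t)) * h2

lemma IsLatticeEnum.tsum_offDiag_heatKernel_le {m : ℕ} {z : ℕ → EuclideanSpace ℝ (Fin m)}
    (hz : IsLatticeEnum m z) {r : ℕ → ℝ} (hrpos : ∀ i, 0 < r i) (hrdec : Antitone r)
    (hr : 2 * r 0 < 1) (hsum : Summable fun i => r i ^ (2 * m)) {t : ℝ} (ht : 0 < t) :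
    ∑' i, ∑' j, (if j = i then 0 else
        ∫⁻ x in ball (z i) (r i), ∫⁻ y in ball (z j) (r j), heatKernel m t x y) ≤
      ENNReal.ofReal ((volume (ball (0 : EuclideanSpace ℝ (Fin m)) 1)).toReal ^ 2 *
        exp (-(1 - 2 * r 0) ^ 2 / (8 * t)) *
        (√2 / (1 - 2 * r 0) + (4 * π * t) ^ (-(1 : ℝ) / 2)) ^ m * ∑' i, r i ^ (2 * m)) := by
  set δ := 1 - 2 * r 0
  have hδ : 0 < δ := by linarith
  set a := δ ^ 2 / (8 * t)
  have ha : 0 < a := by positivity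
  set C := (4 * π * t) ^ (-(m : ℝ) / 2)
  set J : ℕ → ℕ → ℝ≥0∞ := fun i j =>
    ENNReal.ofReal (C * exp (-δ ^ 2 / (8 * t))) * ENNReal.ofReal (exp (-a * dist (z i) (z j) ^ 2))
  have hterm (i j : ℕ) : (if j = i then 0 else
      ∫⁻ x in ball (z i) (r i), ∫⁻ y in ball (z j) (r j), heatKernel m t x y) ≤
      volume (ball (z i) (r i)) * volume (ball (z j) (r j)) * J i j := by
    split_ifs with hji
    · exact zero_le
    exact setLIntegral_setLIntegral_le fun x hx y hy =>
      heatKernel_le_of_mem_ball ht hr.le (hz.one_le_dist (Ne.symm hji))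
        (ball_subset_ball (hrdec (Nat.zero_le i)) hx) (ball_subset_ball (hrdec (Nat.zero_le j)) hy)
  have hrow (i : ℕ) : ∑' j, J i j ≤
      ENNReal.ofReal (C * exp (-δ ^ 2 / (8 * t))) * ENNReal.ofReal (1 + √(π / a)) ^ m := by
    rw [ENNReal.tsum_mul_left]
    gcongr
    exact hz.tsum_exp_neg_mul_dist_sq_le ha i
  calc _ ≤ ∑' i, ∑' j, volume (ball (z i) (r i)) * volume (ball (z j) (r j)) * J i j := by
        gcongr with i j
        exact hterm i j
    _ ≤ _ := ENNReal.tsum_tsum_mul_mul_le _ (fun i j => by simp only [J, dist_comm]) hrow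
    _ = _ := by
        rw [tsum_volume_ball_sq z hrpos hsum, ← ENNReal.ofReal_pow (by positivity),
          ← ENNReal.ofReal_mul (by positivity), ← ENNReal.ofReal_mul (by positivity), mul_assoc C,
          mul_comm (exp _), ← mul_assoc C, rpow_mul_one_add_sqrt_pow m ht hδ]
        ring_nf

theorem heat_content_lattice_balls_almost_additive_general
    (m : ℕ)
    (z : ℕ → EuclideanSpace ℝ (Fin m)) (hz : IsLatticeEnum m z)
    (r : ℕ → ℝ) (hrpos : ∀ i, 0 < r i) (hrdec : Antitone r)
    (δ : ℝ) (hδdef : δ = 1 - 2 * r 0) (hδ : 0 < δ)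
    (hsum : Summable (fun i : ℕ => r i ^ (2 * m)))
    (Ω : Set (EuclideanSpace ℝ (Fin m))) (hΩ : Ω = ⋃ i : ℕ, ball (z i) (r i))
    (ω : ℝ) (hω : ω = (volume (ball (0 : EuclideanSpace ℝ (Fin m)) 1)).toReal) :
    ∀ t : ℝ, 0 < t →
      heatContent Ω t ≤ (∑' i : ℕ, heatContent (ball (z i) (r i)) t) +
        ENNReal.ofReal (ω ^ 2 * Real.exp (-δ ^ 2 / (8 * t)) *
          (Real.sqrt 2 / δ + (4 * Real.pi * t) ^ (-(1 : ℝ) / 2)) ^ m *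
          ∑' i : ℕ, r i ^ (2 * m)) ∧
      (∑' i : ℕ, heatContent (ball (z i) (r i)) t) ≤ heatContent Ω t +
        ENNReal.ofReal (ω ^ 2 * Real.exp (-δ ^ 2 / (8 * t)) *
          (Real.sqrt 2 / δ + (4 * Real.pi * t) ^ (-(1 : ℝ) / 2)) ^ m *
          ∑' i : ℕ, r i ^ (2 * m)) := by
  intro t ht
  subst hδdef hω hΩ
  have hdisj : Pairwise (Function.onFun Disjoint fun i => ball (z i) (r i)) := fun i j hij =>
    ball_disjoint_ball <| by
      linarith [hz.one_le_dist hij, hrdec (Nat.zero_le i), hrdec (Nat.zero_le j)]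
  have hr : 2 * r 0 < 1 := by linarith
  rw [heatContent_iUnion (fun i => measurableSet_ball) hdisj]
  exact ⟨add_le_add le_rfl (hz.tsum_offDiag_heatKernel_le hrpos hrdec hr hsum ht),
    le_self_add.trans le_self_add⟩

/-- Theorem 3(ii): for `Ω` a union of disjoint balls `B(z_i;r_i)` centred at the points of
`ℤᵐ` with decreasing radii, `δ = 1 - 2 r₁ > 0` and `∑ r_i^{2m} < ∞`, the heat content of
`Ω` differs from the sum of the heat contents of the individual balls by at most
`ω_m² e^{-δ²/(8t)} (√2/δ + (4πt)^{-1/2})^m ∑ r_i^{2m}`. -/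
theorem heat_content_lattice_balls_almost_additive
    (m : ℕ) (hm : 1 ≤ m)
    (z : ℕ → EuclideanSpace ℝ (Fin m)) (hz : IsLatticeEnum m z)
    (r : ℕ → ℝ) (hrpos : ∀ i, 0 < r i) (hrdec : Antitone r)
    (δ : ℝ) (hδdef : δ = 1 - 2 * r 0) (hδ : 0 < δ)
    (hsum : Summable (fun i : ℕ => r i ^ (2 * m)))
    (Ω : Set (EuclideanSpace ℝ (Fin m))) (hΩ : Ω = ⋃ i : ℕ, ball (z i) (r i))
    (ω : ℝ) (hω : ω = (volume (ball (0 : EuclideanSpace ℝ (Fin m)) 1)).toReal) :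
    ∀ t : ℝ, 0 < t →
      heatContent Ω t ≤ (∑' i : ℕ, heatContent (ball (z i) (r i)) t) +
        ENNReal.ofReal (ω ^ 2 * Real.exp (-δ ^ 2 / (8 * t)) *
          (Real.sqrt 2 / δ + (4 * Real.pi * t) ^ (-(1 : ℝ) / 2)) ^ m *
          ∑' i : ℕ, r i ^ (2 * m)) ∧
      (∑' i : ℕ, heatContent (ball (z i) (r i)) t) ≤ heatContent Ω t +
        ENNReal.ofReal (ω ^ 2 * Real.exp (-δ ^ 2 / (8 * t)) *
          (Real.sqrt 2 / δ + (4 * Real.pi * t) ^ (-(1 : ℝ) / 2)) ^ m *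
          ∑' i : ℕ, r i ^ (2 * m)) :=
  heat_content_lattice_balls_almost_additive_general m z hz r hrpos hrdec δ hδdef hδ hsum Ω hΩ ω hω
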